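/- arXiv:2011.10552 — 6 statements merged into one kernel-verified Lean document; each statement's English description precedes it below -/
import Mathlib

section
/- Let k be an integer, let α be a real number with 0 < α < 1, and let q be a real number with 0 < q < 1. Then the function x ↦ θ( (−1)^k q^α e^{−x} ; q ) (from ℝ to ℝ) is differentiable at x = 0 with derivative θ( (−1)^k q^α ; q ) · Σ_{n≥0} ( (−1)^k q^{n+α}/(1 − (−1)^k q^{n+α}) − (−1)^k q^{n+1−α}/(1 − (−1)^k q^{n+1−α}) ), the series converging absolutely. -/
/-- The modified Jacobi theta function (real version)
`θ(z;q) = ∏_{j ≥ 0} (1 - z q^j)(1 - q^{j+1}/z)`. -/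
noncomputable def jacobiThetaR (z q : ℝ) : ℝ :=
  ∏' j : ℕ, (1 - z * q ^ j) * (1 - q ^ (j + 1) / z)

/-!
Put `e = (-1)^k`, `a n = e q^(n+α)` and `b n = e q^(n+1-α)`. Since `e² = 1`, the theta product
at `z = e q^α e^(-x)` splits as `∏ (1 - a n e^(-x)) · ∏ (1 - b n e^x)`, with `|a n|, |b n|`
geometrically small and bounded away from `1`. Near `x = 0` each of the two products is the
exponential of a series of logarithms whose termwise derivatives `-a n e^x / (1 - a n e^x)` are
dominated by a summable sequence, so it may be differentiated termwise; the product rule then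
gives `θ · (∑ a n / (1 - a n) - ∑ b n / (1 - b n))`.
-/

open Real Set Filter Topology

lemma abs_div_one_sub_le {y b σ : ℝ} (hy : |y| ≤ b) (hb : b ≤ σ) (hσ : σ < 1) :
    |y / (1 - y)| ≤ b / (1 - σ) := by
  have h1 : 1 - σ ≤ |1 - y| := by
    linarith [abs_sub_abs_le_abs_sub 1 y, abs_one (α := ℝ)]
  rw [abs_div]
  exact div_le_div₀ ((abs_nonneg y).trans hy) hy (by linarith) h1

lemma summable_div_one_sub {a : ℕ → ℝ} (ha : Summable a) :
    Summable fun n => a n / (1 - a n) := by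
  refine Summable.of_norm_bounded_eventually (ha.abs.mul_left 2) ?_
  filter_upwards [ha.abs.tendsto_cofinite_zero.eventually_lt_const one_half_pos] with n hn
  have h := abs_div_one_sub_le le_rfl hn.le one_half_lt_one
  rw [norm_eq_abs]
  linarith [show |a n| / (1 - 1 / 2) = 2 * |a n| by ring]

lemma summable_log_one_sub_of_summable {b : ℕ → ℝ} (hb : Summable b) :
    Summable fun n => log (1 - b n) := by
  simpa only [sub_eq_add_neg] using summable_log_one_add_of_summable hb.neg

lemma multipliable_one_sub_of_summable {b : ℕ → ℝ} (hb : Summable b) :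
    Multipliable fun n => 1 - b n := by
  simpa only [sub_eq_add_neg] using Real.multipliable_one_add_of_summable hb.neg

lemma tprod_one_sub_eq_exp_tsum_log {b : ℕ → ℝ} (hb : Summable b) (hb1 : ∀ n, b n < 1) :
    ∏' n, (1 - b n) = exp (∑' n, log (1 - b n)) :=
  (rexp_tsum_eq_tprod (fun n => sub_pos.2 (hb1 n)) (summable_log_one_sub_of_summable hb)).symm

lemma exists_pos_mul_exp_lt_one {ρ : ℝ} (hρ : ρ < 1) : ∃ c > 0, ρ * exp c < 1 := by
  have h : Tendsto (fun c => ρ * exp c) (𝓝[>] 0) (𝓝 ρ) := by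
    simpa using ((continuous_exp.tendsto 0).const_mul ρ).mono_left nhdsWithin_le_nhds
  obtain ⟨c, hc, hc0⟩ := ((h.eventually_lt_const hρ).and self_mem_nhdsWithin).exists
  exact ⟨c, hc0, hc⟩

theorem hasDerivAt_tprod_one_sub_mul_exp {a : ℕ → ℝ} {ρ : ℝ} (ha : Summable a) (hρ : ρ < 1)
    (haρ : ∀ n, |a n| ≤ ρ) :
    HasDerivAt (fun x => ∏' n, (1 - a n * exp x))
      (-((∏' n, (1 - a n)) * ∑' n, a n / (1 - a n))) 0 := by
  obtain ⟨c, hc0, hc⟩ := exists_pos_mul_exp_lt_one hρ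
  have hbound : ∀ n, ∀ x < c, |a n * exp x| ≤ |a n| * exp c := fun n x hx => by
    rw [abs_mul, abs_of_pos (exp_pos x)]
    gcongr
  have hsmall : ∀ n, |a n| * exp c ≤ ρ * exp c := fun n =>
    mul_le_mul_of_nonneg_right (haρ n) (exp_pos c).le
  have hlt : ∀ n, ∀ x < c, a n * exp x < 1 := fun n x hx =>
    (le_abs_self _).trans_lt ((hbound n x hx).trans_lt ((hsmall n).trans_lt hc))
  have hderiv : ∀ n, ∀ x ∈ Iio c, HasDerivAt (fun x => log (1 - a n * exp x))
      (-(a n * exp x) / (1 - a n * exp x)) x := fun n x hx =>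
    (((hasDerivAt_exp x).const_mul (a n)).const_sub 1).log (sub_pos.2 (hlt n x hx)).ne'
  have hderiv_le : ∀ n, ∀ x ∈ Iio c,
      ‖-(a n * exp x) / (1 - a n * exp x)‖ ≤ |a n| * exp c / (1 - ρ * exp c) := fun n x hx => by
    rw [norm_eq_abs, neg_div, abs_neg]
    exact abs_div_one_sub_le (hbound n x hx) (hsmall n) hc
  have hlog : HasDerivAt (fun x => ∑' n, log (1 - a n * exp x))
      (∑' n, -(a n * exp 0) / (1 - a n * exp 0)) 0 :=
    hasDerivAt_tsum_of_isPreconnected ((ha.abs.mul_right _).div_const _) isOpen_Iio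
      isPreconnected_Iio hderiv hderiv_le hc0
      (summable_log_one_sub_of_summable (ha.mul_right _)) hc0
  have heq : (fun x => ∏' n, (1 - a n * exp x)) =ᶠ[𝓝 0]
      fun x => exp (∑' n, log (1 - a n * exp x)) := by
    filter_upwards [Iio_mem_nhds hc0] with x hx
    exact tprod_one_sub_eq_exp_tsum_log (ha.mul_right _) (fun n => hlt n x hx)
  refine (hlog.exp.congr_of_eventuallyEq heq).congr_deriv ?_
  simp only [exp_zero, mul_one, neg_div, tsum_neg]
  rw [tprod_one_sub_eq_exp_tsum_log ha (fun n => by simpa using hlt n 0 hc0)]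
  ring

lemma jacobiThetaR_eq_mul_tprod (z : ℝ) {q : ℝ} (hq : |q| < 1) :
    jacobiThetaR z q = (∏' n : ℕ, (1 - z * q ^ n)) * ∏' n : ℕ, (1 - q ^ (n + 1) / z) := by
  have hgeom := summable_geometric_of_abs_lt_one hq
  refine Multipliable.tprod_mul (multipliable_one_sub_of_summable (hgeom.mul_left z))
    (multipliable_one_sub_of_summable ?_)
  simpa only [pow_succ] using (hgeom.mul_right q).div_const z

lemma rpow_natCast_add {q : ℝ} (hq : 0 < q) (n : ℕ) (β : ℝ) :
    q ^ ((n : ℝ) + β) = q ^ n * q ^ β := by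
  rw [rpow_add hq, rpow_natCast]

lemma jacobiThetaR_mul_rpow_mul_exp {e q : ℝ} (he : e * e = 1) (hq0 : 0 < q) (hq1 : q < 1)
    (α x : ℝ) :
    jacobiThetaR (e * q ^ α * exp (-x)) q =
      (∏' n : ℕ, (1 - e * q ^ ((n : ℝ) + α) * exp (-x))) *
        ∏' n : ℕ, (1 - e * q ^ ((n : ℝ) + 1 - α) * exp x) := by
  have hz : e * q ^ α * exp (-x) ≠ 0 := by
    have : e ≠ 0 := left_ne_zero_of_mul_eq_one he
    positivity
  rw [jacobiThetaR_eq_mul_tprod _ (by rw [abs_of_pos hq0]; exact hq1)]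
  congr 1 <;> refine tprod_congr fun n => ?_ <;> congr 1
  · rw [rpow_natCast_add hq0]
    ring
  · rw [div_eq_iff hz]
    calc q ^ (n + 1) = (e * e) * q ^ ((n : ℝ) + 1 - α + α) * exp (x + -x) := by
          rw [he, sub_add_cancel, add_neg_cancel, exp_zero, ← Nat.cast_add_one, rpow_natCast]
          ring
      _ = _ := by
          rw [rpow_add hq0, exp_add]
          ring

lemma summable_mul_rpow_natCast_add (e β : ℝ) {q : ℝ} (hq0 : 0 < q) (hq1 : q < 1) :
    Summable fun n : ℕ => e * q ^ ((n : ℝ) + β) := by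
  simp only [rpow_natCast_add hq0]
  exact ((summable_geometric_of_lt_one hq0.le hq1).mul_right _).mul_left e

lemma abs_mul_rpow_natCast_add_le {e : ℝ} (he : |e| = 1) {q : ℝ} (hq0 : 0 < q) (hq1 : q ≤ 1)
    (n : ℕ) (β : ℝ) : |e * q ^ ((n : ℝ) + β)| ≤ q ^ β := by
  rw [abs_mul, he, one_mul, abs_of_pos (rpow_pos_of_pos hq0 _)]
  exact rpow_le_rpow_of_exponent_ge hq0 hq1 (by linarith [n.cast_nonneg (α := ℝ)])

/-- the logarithmic-derivative computation of
`x ↦ θ((-1)^k q^α e^{-x}; q)` at `x = 0`; the Lambert-type series converges absolutely. -/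
theorem theta_deriv (k : ℤ) (α : ℝ) (hα0 : 0 < α) (hα1 : α < 1)
    (q : ℝ) (hq0 : 0 < q) (hq1 : q < 1) :
    (Summable fun n : ℕ =>
        |(-1 : ℝ) ^ k * q ^ ((n : ℝ) + α) / (1 - (-1 : ℝ) ^ k * q ^ ((n : ℝ) + α)) -
          (-1 : ℝ) ^ k * q ^ ((n : ℝ) + 1 - α) /
            (1 - (-1 : ℝ) ^ k * q ^ ((n : ℝ) + 1 - α))|) ∧
      HasDerivAt (fun x : ℝ => jacobiThetaR ((-1 : ℝ) ^ k * q ^ α * Real.exp (-x)) q)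
        (jacobiThetaR ((-1 : ℝ) ^ k * q ^ α) q *
          ∑' n : ℕ,
            ((-1 : ℝ) ^ k * q ^ ((n : ℝ) + α) / (1 - (-1 : ℝ) ^ k * q ^ ((n : ℝ) + α)) -
              (-1 : ℝ) ^ k * q ^ ((n : ℝ) + 1 - α) /
                (1 - (-1 : ℝ) ^ k * q ^ ((n : ℝ) + 1 - α))))
        0 := by
  set e : ℝ := (-1) ^ k
  have he : |e| = 1 := by simp [e]
  have hee : e * e = 1 := by rw [← abs_mul_abs_self, he, one_mul]
  set A : ℕ → ℝ := fun n => e * q ^ ((n : ℝ) + α)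
  set B : ℕ → ℝ := fun n => e * q ^ ((n : ℝ) + 1 - α)
  have hA : Summable A := summable_mul_rpow_natCast_add e α hq0 hq1
  have hB : Summable B := by
    simp only [B, add_sub_assoc]
    exact summable_mul_rpow_natCast_add e (1 - α) hq0 hq1
  have hA_deriv := hasDerivAt_tprod_one_sub_mul_exp hA (rpow_lt_one hq0.le hq1 hα0)
    (abs_mul_rpow_natCast_add_le he hq0 hq1.le · α)
  have hB_deriv := hasDerivAt_tprod_one_sub_mul_exp hB (rpow_lt_one hq0.le hq1 (sub_pos.2 hα1))
    fun n => by
      simp only [B, add_sub_assoc]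
      exact abs_mul_rpow_natCast_add_le he hq0 hq1.le n (1 - α)
  refine ⟨((summable_div_one_sub hA).sub (summable_div_one_sub hB)).abs, ?_⟩
  have hθ := jacobiThetaR_mul_rpow_mul_exp hee hq0 hq1 α
  simp only [hθ]
  refine ((hA_deriv.comp_of_eq 0 (hasDerivAt_neg' 0) neg_zero.symm).mul hB_deriv).congr_deriv ?_
  have hθ0 := hθ 0
  simp only [neg_zero, exp_zero, mul_one] at hθ0
  simp only [Function.comp_apply, neg_zero, exp_zero, mul_one]
  rw [hθ0, (summable_div_one_sub hA).tsum_sub (summable_div_one_sub hB)]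
  ring
end

section
/- For every complex number q with ‖q‖ < 1, the function x ↦ θ(e^{−x}; q) (from ℝ to ℂ) is differentiable at x = 0 with derivative equal to (q;q)_∞² = ∏_{n≥1} (1 − q^n)². -/
/-!
Write `(a;q)_∞ = ∏_{n ≥ 0} (1 - a qⁿ)`. Splitting the factors of `θ` gives
`θ(z;q) = (z;q)_∞ (q/z;q)_∞ = (1 - z) (zq;q)_∞ (q/z;q)_∞`, and `a ↦ (a;q)_∞` is entire, being a
locally uniform limit of polynomials. Hence `θ(·;q)` has derivative `-(q;q)_∞²` at its simple
zero `z = 1`, and the chain rule along `z = e^{-x}`, with `dz/dx = -1` at `x = 0`, finishes.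
-/

/-- The modified Jacobi theta function `θ(z;q) = ∏_{j ≥ 0} (1 - z q^j)(1 - q^{j+1}/z)`. -/
noncomputable def jacobiTheta' (z q : ℂ) : ℂ :=
  ∏' j : ℕ, (1 - z * q ^ j) * (1 - q ^ (j + 1) / z)

noncomputable def qPochhammer (a q : ℂ) : ℂ :=
  ∏' n : ℕ, (1 - a * q ^ n)

section OneSubMul

variable {a : ℕ → ℂ}

lemma multipliable_one_sub_mul (ha : Summable fun n => ‖a n‖) (w : ℂ) :
    Multipliable fun n => 1 - w * a n := by
  simp_rw [sub_eq_add_neg]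
  refine multipliable_one_add_of_summable ?_
  simpa [norm_mul] using ha.mul_left ‖w‖

lemma differentiable_tprod_one_sub_mul (ha : Summable fun n => ‖a n‖) :
    Differentiable ℂ fun w => ∏' n, (1 - w * a n) := by
  intro w₀
  set R := ‖w₀‖ + 1
  have hw₀ : w₀ ∈ Metric.ball (0 : ℂ) R := by simp [R]
  have hprod : HasProdLocallyUniformlyOn (fun n w => 1 + -(w * a n))
      (fun w => ∏' n, (1 + -(w * a n))) (Metric.ball 0 R) :=
    (ha.mul_left R).hasProdLocallyUniformlyOn_nat_one_add Metric.isOpen_ball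
      (.of_forall fun n w hw => by
        rw [norm_neg, norm_mul]
        gcongr
        simpa [R] using (mem_ball_zero_iff.mp hw).le)
      (fun n => by fun_prop)
  have hdiff := hprod.differentiableOn (.of_forall fun s => by
    simpa [Finset.prod_fn] using DifferentiableOn.finsetProd (fun _ _ ↦ by fun_prop))
    Metric.isOpen_ball
  simp_rw [← sub_eq_add_neg] at hdiff
  exact hdiff.differentiableAt (Metric.isOpen_ball.mem_nhds hw₀)

end OneSubMul

section Theta

variable {q : ℂ}

lemma differentiable_qPochhammer (hq : ‖q‖ < 1) : Differentiable ℂ fun a => qPochhammer a q :=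
  differentiable_tprod_one_sub_mul (summable_norm_geometric_of_norm_lt_one hq)

lemma qPochhammer_eq_one_sub_mul (hq : ‖q‖ < 1) (a : ℂ) :
    qPochhammer a q = (1 - a) * qPochhammer (a * q) q := by
  have hmul := multipliable_one_sub_mul (summable_norm_geometric_of_norm_lt_one hq) (a * q)
  rw [qPochhammer, tprod_eq_zero_mul' (hmul.congr fun n => by ring)]
  simp only [pow_zero, mul_one, qPochhammer, pow_succ, mul_assoc, mul_comm q]

lemma jacobiTheta'_eq_qPochhammer_mul (hq : ‖q‖ < 1) (z : ℂ) :
    jacobiTheta' z q = qPochhammer z q * qPochhammer (q / z) q := by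
  have hsum := summable_norm_geometric_of_norm_lt_one hq
  rw [qPochhammer, qPochhammer, ← (multipliable_one_sub_mul hsum z).tprod_mul
    (multipliable_one_sub_mul hsum (q / z))]
  exact tprod_congr fun n => by ring

lemma jacobiTheta'_eq_one_sub_mul (hq : ‖q‖ < 1) (z : ℂ) :
    jacobiTheta' z q = (1 - z) * (qPochhammer (z * q) q * qPochhammer (q / z) q) := by
  rw [jacobiTheta'_eq_qPochhammer_mul hq, qPochhammer_eq_one_sub_mul hq, mul_assoc]

theorem hasDerivAt_jacobiTheta'_one (hq : ‖q‖ < 1) :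
    HasDerivAt (fun z => jacobiTheta' z q) (-qPochhammer q q ^ 2) 1 := by
  set G : ℂ → ℂ := fun z => qPochhammer (z * q) q * qPochhammer (q / z) q
  have hG : DifferentiableAt ℂ G 1 := by
    have := differentiable_qPochhammer hq
    fun_prop (disch := norm_num)
  have hprod := ((hasDerivAt_id' (1 : ℂ)).const_sub 1).fun_mul hG.hasDerivAt
  rw [funext (jacobiTheta'_eq_one_sub_mul hq)]
  exact hprod.congr_deriv (by simp [G, sq])

lemma qPochhammer_self_sq (hq : ‖q‖ < 1) :
    qPochhammer q q ^ 2 = ∏' n : ℕ, (1 - q ^ (n + 1)) ^ 2 := by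
  rw [(ModularForm.multipliable_one_sub_pow hq).tprod_pow, qPochhammer]
  simp only [pow_succ']

end Theta

/-- the derivative of `x ↦ θ(e^{-x}; q)` at `x = 0` is `(q;q)_∞²`. -/
theorem theta_deriv_at_one (q : ℂ) (hq : ‖q‖ < 1) :
    HasDerivAt (fun x : ℝ => jacobiTheta' ((Real.exp (-x) : ℝ) : ℂ) q)
      (∏' n : ℕ, (1 - q ^ (n + 1)) ^ 2) 0 := by
  have hexp : HasDerivAt (fun x : ℝ => ((Real.exp (-x) : ℝ) : ℂ)) (-1) 0 := by
    simpa using ((Real.hasDerivAt_exp (-0)).comp 0 (hasDerivAt_neg 0)).ofReal_comp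
  rw [← qPochhammer_self_sq hq]
  exact ((hasDerivAt_jacobiTheta'_one hq).comp_of_eq 0 hexp (by simp)).congr_deriv (by ring)
end

section
/- For every real number x > 0 and every integer y > 2, Σ_{k=2}^{y} I₁(2x/k) ≤ x·log y + 2·I₁(x) − (2 − γ − 1/(2y))·x, where γ is the Euler–Mascheroni constant. -/
/-!
Expand each `I₁(2x/k)` in its power series and sum over `k` first: the coefficient of
`x^(2m+1) / (m! (m+1)!)` becomes the power sum `Σ_{k=2}^y k^(-(2m+1))`. For `m = 0` this is
`H_y - 1 ≤ log y + γ + 1/(2y) - 1`, since `H_n - log n - 1/(2n)` increases to `γ`. For `m ≥ 1`,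
`(x/k)^(2m+1) ≤ (x/2)^(2m+1) (2/k)³` and `Σ_{k≥2} k⁻³ ≤ 1/4`, so the `m`-th term is at most the
`m`-th term of the series of `2 I₁(x)`, whose `m = 0` term is `x`.
-/

noncomputable def besselI1 (x : ℝ) : ℝ :=
  ∑' m : ℕ, (1 / (m.factorial * (m + 1).factorial) : ℝ) * (x / 2) ^ (2 * m + 1)

open Real Finset Filter Topology

lemma Real.log_le_sub_inv_div_two {t : ℝ} (ht : 1 ≤ t) : log t ≤ (t - t⁻¹) / 2 := by
  have ht0 : 0 < t := one_pos.trans_le ht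
  have h := self_le_sinh_iff.mpr (log_nonneg ht)
  rwa [sinh_eq, exp_log ht0, exp_neg, exp_log ht0] at h

lemma harmonic_le_log_add_eulerMascheroniConstant {n : ℕ} (hn : n ≠ 0) :
    (harmonic n : ℝ) ≤ log n + eulerMascheroniConstant + 1 / (2 * n) := by
  set a : ℕ → ℝ := fun j ↦ harmonic (j + 1) - log (j + 1 : ℕ) - 1 / (2 * (j + 1 : ℕ))
  have ha_mono : Monotone a := by
    refine monotone_nat_of_le_succ fun j ↦ ?_
    have hlog := log_le_sub_inv_div_two (t := (j + 2) / (j + 1))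
      (by rw [le_div_iff₀ (by positivity)]; linarith)
    have hrhs : (((j : ℝ) + 2) / (j + 1) - (((j : ℝ) + 2) / (j + 1))⁻¹) / 2
        = 1 / (2 * ((j : ℝ) + 1)) + 1 / (2 * ((j : ℝ) + 2)) := by
      field_simp; ring
    rw [log_div (by positivity) (by positivity), hrhs] at hlog
    simp only [a, harmonic_succ (j + 1)]
    push_cast
    rw [show (j : ℝ) + 1 + 1 = j + 2 by ring]
    have : ((j : ℝ) + 2)⁻¹ = 1 / (2 * (j + 2)) + 1 / (2 * (j + 2)) := by field_simp; ring
    linarith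
  have ha_lim : Tendsto a atTop (𝓝 eulerMascheroniConstant) := by
    have h := (tendsto_harmonic_sub_log.comp (tendsto_add_atTop_nat 1)).sub
      ((tendsto_one_div_atTop_nhds_zero_nat.comp (tendsto_add_atTop_nat 1)).const_mul (1 / 2))
    simp only [mul_zero, sub_zero] at h
    refine h.congr fun j ↦ ?_
    simp only [a, Function.comp, one_div, mul_inv]
  obtain ⟨m, rfl⟩ := Nat.exists_eq_succ_of_ne_zero hn
  have := ha_mono.ge_of_tendsto ha_lim m
  simp only [a] at this
  linarith

lemma sum_Icc_two_div_le {x : ℝ} (hx : 0 ≤ x) {n : ℕ} (hn : n ≠ 0) :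
    ∑ k ∈ Icc 2 n, x / k ≤ x * (log n + eulerMascheroniConstant + 1 / (2 * n) - 1) := by
  have hH : (harmonic n : ℝ) = 1 + ∑ k ∈ Icc 2 n, (k : ℝ)⁻¹ := by
    rw [harmonic_eq_sum_Icc, ← insert_Icc_add_one_left_eq_Icc (Nat.one_le_iff_ne_zero.2 hn),
      sum_insert (by simp)]
    push_cast
    norm_num
  calc ∑ k ∈ Icc 2 n, x / k = x * ∑ k ∈ Icc 2 n, (k : ℝ)⁻¹ := by
        simp only [div_eq_mul_inv, mul_sum]
    _ ≤ x * (log n + eulerMascheroniConstant + 1 / (2 * n) - 1) := by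
        gcongr
        linarith [harmonic_le_log_add_eulerMascheroniConstant hn]

-- telescoping: `1/k³ ≤ 1/((k-1)k(k+1)) = 1/(2(k-1)k) - 1/(2k(k+1))`
lemma sum_Icc_two_inv_pow_three_le (n : ℕ) :
    ∑ k ∈ Icc 2 n, ((k : ℝ) ^ 3)⁻¹ ≤ 1 / 4 - 1 / (2 * n * (n + 1)) := by
  induction n with
  | zero => norm_num
  | succ n ih =>
    rcases Nat.eq_zero_or_pos n with rfl | hn
    · norm_num
    have hn' : (1 : ℝ) ≤ n := by exact_mod_cast hn
    have hstep : (((n : ℝ) + 1) ^ 3)⁻¹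
        ≤ 1 / (2 * (n : ℝ) * (n + 1)) - 1 / (2 * ((n : ℝ) + 1) * (n + 2)) := by
      rw [inv_eq_one_div, div_sub_div _ _ (by positivity) (by positivity),
        div_le_div_iff₀ (by positivity) (by positivity)]
      nlinarith
    rw [sum_Icc_succ_top (by omega)]
    push_cast
    rw [show (n : ℝ) + 1 + 1 = n + 2 by ring]
    linarith

lemma sum_Icc_two_div_pow_le {x : ℝ} (hx : 0 ≤ x) (n : ℕ) {m : ℕ} (hm : m ≠ 0) :
    ∑ k ∈ Icc 2 n, (x / k) ^ (2 * m + 1) ≤ 2 * (x / 2) ^ (2 * m + 1) := by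
  have hterm : ∀ k ∈ Icc 2 n,
      (x / k) ^ (2 * m + 1) ≤ (x / 2) ^ (2 * m + 1) * (8 * ((k : ℝ) ^ 3)⁻¹) := by
    intro k hk
    have hk : (2 : ℝ) ≤ k := by exact_mod_cast (mem_Icc.1 hk).1
    calc (x / k) ^ (2 * m + 1) = (x / 2) ^ (2 * m + 1) * (2 / k) ^ (2 * m + 1) := by
          rw [← mul_pow]; congr 1; field_simp
      _ ≤ (x / 2) ^ (2 * m + 1) * (2 / k) ^ 3 := by
          refine mul_le_mul_of_nonneg_left ?_ (by positivity)
          exact pow_le_pow_of_le_one (by positivity) (div_le_one_of_le₀ hk (by positivity))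
            (by omega)
      _ = (x / 2) ^ (2 * m + 1) * (8 * ((k : ℝ) ^ 3)⁻¹) := by ring
  calc ∑ k ∈ Icc 2 n, (x / k) ^ (2 * m + 1)
      ≤ (x / 2) ^ (2 * m + 1) * (8 * ∑ k ∈ Icc 2 n, ((k : ℝ) ^ 3)⁻¹) := by
        rw [mul_sum, mul_sum]; exact sum_le_sum hterm
    _ ≤ (x / 2) ^ (2 * m + 1) * (8 * (1 / 4)) := by
        have : 0 ≤ 1 / (2 * (n : ℝ) * (n + 1)) := by positivity
        gcongr
        linarith [sum_Icc_two_inv_pow_three_le n]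
    _ = 2 * (x / 2) ^ (2 * m + 1) := by ring

noncomputable def besselI1Coeff (m : ℕ) : ℝ := 1 / (m.factorial * (m + 1).factorial)

lemma besselI1Coeff_zero : besselI1Coeff 0 = 1 := by
  simp [besselI1Coeff]

lemma besselI1Coeff_nonneg (m : ℕ) : 0 ≤ besselI1Coeff m := by
  unfold besselI1Coeff; positivity

lemma summable_besselI1Coeff_mul_pow (u : ℝ) :
    Summable fun m ↦ besselI1Coeff m * u ^ (2 * m + 1) := by
  refine Summable.of_norm_bounded ((summable_pow_div_factorial (u ^ 2)).mul_left |u|) fun m ↦ ?_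
  have hcoeff : besselI1Coeff m ≤ 1 / m.factorial := by
    unfold besselI1Coeff
    gcongr
    exact le_mul_of_one_le_right (by positivity) (by exact_mod_cast (m + 1).factorial_pos)
  rw [norm_mul, Real.norm_of_nonneg (besselI1Coeff_nonneg m), norm_pow, norm_eq_abs,
    pow_succ, pow_mul, sq_abs]
  calc besselI1Coeff m * ((u ^ 2) ^ m * |u|) ≤ 1 / m.factorial * ((u ^ 2) ^ m * |u|) := by
        gcongr
    _ = |u| * ((u ^ 2) ^ m / m.factorial) := by ring

lemma hasSum_besselI1 (x : ℝ) :
    HasSum (fun m ↦ besselI1Coeff m * (x / 2) ^ (2 * m + 1)) (besselI1 x) :=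
  (summable_besselI1Coeff_mul_pow _).hasSum

/-- for real `x > 0` and integer `y > 2`,
`Σ_{k=2}^{y} I₁(2x/k) ≤ x log y + 2 I₁(x) - (2 - γ - 1/(2y)) x`. -/
theorem besselI1_sum_bound (x : ℝ) (hx : 0 < x) (y : ℕ) (hy : 2 < y) :
    ∑ k ∈ Finset.Icc 2 y, besselI1 (2 * x / k) ≤
      x * Real.log y + 2 * besselI1 x -
        (2 - Real.eulerMascheroniConstant - 1 / (2 * y)) * x := by
  have hlhs : HasSum (fun m ↦ besselI1Coeff m * ∑ k ∈ Icc 2 y, (x / k) ^ (2 * m + 1))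
      (∑ k ∈ Icc 2 y, besselI1 (2 * x / k)) := by
    simp only [mul_sum]
    refine hasSum_sum fun k _ ↦ ?_
    have h := hasSum_besselI1 (2 * x / k)
    rwa [show 2 * x / k / 2 = x / k by ring] at h
  have hrhs : HasSum (fun m ↦ 2 * (besselI1Coeff m * (x / 2) ^ (2 * m + 1)) +
        if m = 0 then x * (log y + eulerMascheroniConstant + 1 / (2 * y) - 2) else 0)
      (2 * besselI1 x + x * (log y + eulerMascheroniConstant + 1 / (2 * y) - 2)) :=
    ((hasSum_besselI1 x).mul_left 2).add (hasSum_ite_eq 0 _)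
  calc ∑ k ∈ Icc 2 y, besselI1 (2 * x / k)
      ≤ 2 * besselI1 x + x * (log y + eulerMascheroniConstant + 1 / (2 * y) - 2) :=
        hasSum_le (fun m ↦ ?_) hlhs hrhs
    _ = _ := by ring
  rcases eq_or_ne m 0 with rfl | hm
  · simp only [besselI1Coeff_zero, if_pos, one_mul, mul_zero, zero_add, pow_one]
    linarith [sum_Icc_two_div_le hx.le (n := y) (by omega)]
  · simp only [hm, if_false, add_zero]
    rw [mul_left_comm]
    exact mul_le_mul_of_nonneg_left (sum_Icc_two_div_pow_le hx.le y hm) (besselI1Coeff_nonneg m)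
end

section
/- Let δ be a real number with 0.227 ≤ δ ≤ 3. Define w(δ) = (1/2)·log(1/δ) + 0.736·( 1.689^δ·(1.222 + 1.002^δ) + 3·1.692^δ )/δ + 0.119, M(u) = ( u·w(δ) + u·log u + 2·I₁(u) ) / I₁(2u) for u > 0, and L_{δ,n} = (π/18)·√(δ(12n − δ)). Then n ↦ M(L_{δ,n}) is nonincreasing for integers n ≥ 158; that is, for all integers 158 ≤ m ≤ n one has M(L_{δ,n}) ≤ M(L_{δ,m}). -/
set_option maxHeartbeats 1000000

open scoped Real

namespace BAux

noncomputable def c (m : ℕ) : ℝ := 1 / (m.factorial * (m + 1).factorial)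

lemma c_nonneg (m : ℕ) : 0 ≤ c m := by
  unfold c; positivity

lemma c_le (m : ℕ) : c m ≤ 1 / m.factorial := by
  unfold c
  apply one_div_le_one_div_of_le
  · exact_mod_cast m.factorial_pos
  · have h1 : (1:ℝ) ≤ ((m+1).factorial : ℝ) := by exact_mod_cast (m+1).factorial_pos
    have h2 : (0:ℝ) ≤ (m.factorial : ℝ) := by positivity
    nlinarith

lemma besselI1_eq (x : ℝ) : besselI1 x = ∑' m : ℕ, c m * (x / 2) ^ (2 * m + 1) := rfl

lemma besselI1_two_mul (u : ℝ) : besselI1 (2 * u) = ∑' m : ℕ, c m * u ^ (2 * m + 1) := by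
  rw [besselI1_eq]
  have : (2 * u) / 2 = u := by ring
  rw [this]

lemma summable_term (x : ℝ) (hx : 0 ≤ x) : Summable (fun m : ℕ => c m * x ^ (2 * m + 1)) := by
  apply Summable.of_nonneg_of_le
    (fun m => mul_nonneg (c_nonneg m) (pow_nonneg hx _))
    (fun m => ?_) ((Real.summable_pow_div_factorial (x^2)).mul_left x)
  have hE : x ^ (2 * m + 1) = (x ^ 2) ^ m * x := by
    rw [pow_succ, pow_mul]
  calc c m * x ^ (2 * m + 1) = (x ^ 2) ^ m * x * c m := by rw [hE]; ring
    _ ≤ (x ^ 2) ^ m * x * (1 / m.factorial) := by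
        apply mul_le_mul_of_nonneg_left (c_le m) (by positivity)
    _ = x * ((x ^ 2) ^ m / m.factorial) := by ring

lemma besselI1_pos {x : ℝ} (hx : 0 < x) : 0 < besselI1 x := by
  rw [besselI1_eq]
  have hs := summable_term (x / 2) (by linarith)
  have h0 : (0:ℝ) < c 0 * (x / 2) ^ (2 * 0 + 1) := by
    have : c 0 = 1 := by norm_num [c, Nat.factorial]
    rw [this]; simpa using by linarith
  calc (0:ℝ) < c 0 * (x / 2) ^ (2 * 0 + 1) := h0
    _ ≤ ∑' m : ℕ, c m * (x / 2) ^ (2 * m + 1) :=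
        Summable.le_tsum hs 0 (fun j _ => mul_nonneg (c_nonneg j) (pow_nonneg (by linarith) _))

lemma denom_mono {u1 u2 : ℝ} (h1 : 2 ≤ u1) (h12 : u1 ≤ u2) :
    u2 ^ 3 * besselI1 (2 * u1) ≤ u1 ^ 3 * besselI1 (2 * u2) := by
  have h0 : (0:ℝ) < u1 := by linarith
  have h2 : (0:ℝ) < u2 := by linarith
  rw [besselI1_two_mul, besselI1_two_mul, ← tsum_mul_left, ← tsum_mul_left]
  have hs1 : Summable (fun m : ℕ => u2 ^ 3 * (c m * u1 ^ (2 * m + 1))) :=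
    (summable_term u1 h0.le).mul_left _
  have hs2 : Summable (fun m : ℕ => u1 ^ 3 * (c m * u2 ^ (2 * m + 1))) :=
    (summable_term u2 h2.le).mul_left _
  rw [← Summable.sum_add_tsum_nat_add 3 hs1, ← Summable.sum_add_tsum_nat_add 3 hs2]
  apply add_le_add
  · have h4 : (4:ℝ) ≤ u1 ^ 2 := by nlinarith
    have h5 : (4:ℝ) ≤ u2 ^ 2 := by nlinarith
    have h16 : (16:ℝ) ≤ u1 ^ 2 * u2 ^ 2 := by
      nlinarith [mul_le_mul_of_nonneg_right h4 (by positivity : (0:ℝ) ≤ u2 ^ 2)]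
    have hkey : 0 ≤ (u1 ^ 2 * u2 ^ 2 - 12) * (u1 * u2) * (u2 ^ 2 - u1 ^ 2) := by
      apply mul_nonneg (mul_nonneg (by nlinarith) (by positivity)) (by nlinarith)
    simp only [Finset.sum_range_succ, Finset.sum_range_zero, c, Nat.factorial]
    norm_num
    nlinarith [hkey]
  · have A1 : Summable (fun i : ℕ => u2 ^ 3 * (c (i+3) * u1 ^ (2 * (i+3) + 1))) :=
      (summable_nat_add_iff (f := fun m : ℕ => u2 ^ 3 * (c m * u1 ^ (2 * m + 1))) 3).2 hs1
    have A2 : Summable (fun i : ℕ => u1 ^ 3 * (c (i+3) * u2 ^ (2 * (i+3) + 1))) :=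
      (summable_nat_add_iff (f := fun m : ℕ => u1 ^ 3 * (c m * u2 ^ (2 * m + 1))) 3).2 hs2
    refine Summable.tsum_le_tsum (fun i => ?_) A1 A2
    have key : u2 ^ 3 * u1 ^ (2 * (i + 3) + 1) ≤ u1 ^ 3 * u2 ^ (2 * (i + 3) + 1) := by
      have e1 : 2 * (i + 3) + 1 = (2 * i + 4) + 3 := by ring
      have e : ∀ v : ℝ, v ^ (2 * (i + 3) + 1) = v ^ (2 * i + 4) * v ^ 3 := fun v => by
        rw [e1, pow_add]
      rw [e u1, e u2]
      have hp : u1 ^ (2 * i + 4) ≤ u2 ^ (2 * i + 4) := pow_le_pow_left₀ h0.le h12 _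
      nlinarith [mul_le_mul_of_nonneg_left hp (by positivity : (0:ℝ) ≤ u1 ^ 3 * u2 ^ 3)]
    calc u2 ^ 3 * (c (i + 3) * u1 ^ (2 * (i + 3) + 1))
        = c (i + 3) * (u2 ^ 3 * u1 ^ (2 * (i + 3) + 1)) := by ring
      _ ≤ c (i + 3) * (u1 ^ 3 * u2 ^ (2 * (i + 3) + 1)) :=
          mul_le_mul_of_nonneg_left key (c_nonneg _)
      _ = u1 ^ 3 * (c (i + 3) * u2 ^ (2 * (i + 3) + 1)) := by ring

lemma pair_ineq {u1 u2 : ℝ} (h0 : 0 < u1) (h12 : u1 ≤ u2) (a k : ℕ) :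
    (u2/2)^(2*a+1) * u1^(2*(a+k)+1) + (u2/2)^(2*(a+k)+1) * u1^(2*a+1)
      ≤ (u1/2)^(2*a+1) * u2^(2*(a+k)+1) + (u1/2)^(2*(a+k)+1) * u2^(2*a+1) := by
  have h2 : 0 < u2 := h0.trans_le h12
  have hq : u1^(2*k) ≤ u2^(2*k) := pow_le_pow_left₀ h0.le h12 _
  have h2AB : (2:ℝ)^(2*a+1) ≤ (2:ℝ)^(2*(a+k)+1) :=
    pow_le_pow_right₀ (by norm_num) (by omega)
  have he : ∀ v : ℝ, v^(2*(a+k)+1) = v^(2*a+1) * v^(2*k) := fun v => by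
    rw [← pow_add]; congr 1; ring
  have hu : u2^(2*a+1) * u1^(2*(a+k)+1) ≤ u1^(2*a+1) * u2^(2*(a+k)+1) := by
    rw [he u1, he u2]
    nlinarith [mul_le_mul_of_nonneg_left hq
      (by positivity : (0:ℝ) ≤ u1^(2*a+1) * u2^(2*a+1))]
  have core : u2^(2*a+1) * u1^(2*(a+k)+1) * (2:ℝ)^(2*(a+k)+1)
        + (2:ℝ)^(2*a+1) * (u2^(2*(a+k)+1) * u1^(2*a+1))
      ≤ u1^(2*a+1) * u2^(2*(a+k)+1) * (2:ℝ)^(2*(a+k)+1)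
        + (2:ℝ)^(2*a+1) * (u1^(2*(a+k)+1) * u2^(2*a+1)) := by
    nlinarith [mul_nonneg (sub_nonneg.2 h2AB) (sub_nonneg.2 hu)]
  simp only [div_pow, div_mul_eq_mul_div]
  rw [div_add_div _ _ (by positivity) (by positivity),
      div_add_div _ _ (by positivity) (by positivity),
      div_le_div_iff₀ (by positivity) (by positivity)]
  exact mul_le_mul_of_nonneg_right core (by positivity)

lemma sym_le {u1 u2 : ℝ} (h0 : 0 < u1) (h12 : u1 ≤ u2) (a b : ℕ) :
    c a * (u2/2)^(2*a+1) * (c b * u1^(2*b+1)) + c b * (u2/2)^(2*b+1) * (c a * u1^(2*a+1))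
      ≤ c a * (u1/2)^(2*a+1) * (c b * u2^(2*b+1)) + c b * (u1/2)^(2*b+1) * (c a * u2^(2*a+1)) := by
  rcases le_total a b with hab | hba
  · obtain ⟨k, rfl⟩ := Nat.exists_eq_add_of_le hab
    have h := pair_ineq h0 h12 a k
    have hc : 0 ≤ c a * c (a+k) := mul_nonneg (c_nonneg a) (c_nonneg (a+k))
    nlinarith [mul_le_mul_of_nonneg_left h hc]
  · obtain ⟨k, rfl⟩ := Nat.exists_eq_add_of_le hba
    have h := pair_ineq h0 h12 b k
    have hc : 0 ≤ c b * c (b+k) := mul_nonneg (c_nonneg b) (c_nonneg (b+k))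
    nlinarith [mul_le_mul_of_nonneg_left h hc]

lemma prod_mono {u1 u2 : ℝ} (h0 : 0 < u1) (h12 : u1 ≤ u2) :
    besselI1 u2 * besselI1 (2 * u1) ≤ besselI1 u1 * besselI1 (2 * u2) := by
  have h2 : 0 < u2 := h0.trans_le h12
  have hf2 : Summable fun m : ℕ => c m * (u2/2)^(2*m+1) := summable_term _ (by positivity)
  have hf1 : Summable fun m : ℕ => c m * (u1/2)^(2*m+1) := summable_term _ (by positivity)
  have hg1 : Summable fun m : ℕ => c m * u1^(2*m+1) := summable_term _ h0.le
  have hg2 : Summable fun m : ℕ => c m * u2^(2*m+1) := summable_term _ h2.le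
  have nn2 : ∀ m : ℕ, 0 ≤ c m * (u2/2)^(2*m+1) :=
    fun m => mul_nonneg (c_nonneg m) (pow_nonneg (by positivity) _)
  have nn1 : ∀ m : ℕ, 0 ≤ c m * (u1/2)^(2*m+1) :=
    fun m => mul_nonneg (c_nonneg m) (pow_nonneg (by positivity) _)
  have mm1 : ∀ m : ℕ, 0 ≤ c m * u1^(2*m+1) :=
    fun m => mul_nonneg (c_nonneg m) (pow_nonneg h0.le _)
  have mm2 : ∀ m : ℕ, 0 ≤ c m * u2^(2*m+1) :=
    fun m => mul_nonneg (c_nonneg m) (pow_nonneg h2.le _)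
  have hF : Summable fun p : ℕ×ℕ => (c p.1 * (u2/2)^(2*p.1+1)) * (c p.2 * u1^(2*p.2+1)) :=
    hf2.mul_of_nonneg hg1 nn2 mm1
  have hG : Summable fun p : ℕ×ℕ => (c p.1 * (u1/2)^(2*p.1+1)) * (c p.2 * u2^(2*p.2+1)) :=
    hf1.mul_of_nonneg hg2 nn1 mm2
  rw [besselI1_eq u2, besselI1_eq u1, besselI1_two_mul u1, besselI1_two_mul u2,
      Summable.tsum_mul_tsum hf2 hg1 hF, Summable.tsum_mul_tsum hf1 hg2 hG]
  have hFs : Summable fun p : ℕ×ℕ => (c p.2 * (u2/2)^(2*p.2+1)) * (c p.1 * u1^(2*p.1+1)) :=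
    (Equiv.prodComm ℕ ℕ).summable_iff.2 hF
  have hGs : Summable fun p : ℕ×ℕ => (c p.2 * (u1/2)^(2*p.2+1)) * (c p.1 * u2^(2*p.1+1)) :=
    (Equiv.prodComm ℕ ℕ).summable_iff.2 hG
  have swapF : ∑' p : ℕ×ℕ, (c p.2 * (u2/2)^(2*p.2+1)) * (c p.1 * u1^(2*p.1+1))
      = ∑' p : ℕ×ℕ, (c p.1 * (u2/2)^(2*p.1+1)) * (c p.2 * u1^(2*p.2+1)) :=
    (Equiv.prodComm ℕ ℕ).tsum_eq fun p : ℕ×ℕ => (c p.1 * (u2/2)^(2*p.1+1)) * (c p.2 * u1^(2*p.2+1))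
  have swapG : ∑' p : ℕ×ℕ, (c p.2 * (u1/2)^(2*p.2+1)) * (c p.1 * u2^(2*p.1+1))
      = ∑' p : ℕ×ℕ, (c p.1 * (u1/2)^(2*p.1+1)) * (c p.2 * u2^(2*p.2+1)) :=
    (Equiv.prodComm ℕ ℕ).tsum_eq fun p : ℕ×ℕ => (c p.1 * (u1/2)^(2*p.1+1)) * (c p.2 * u2^(2*p.2+1))
  have key : ∑' p : ℕ×ℕ, ((c p.1 * (u2/2)^(2*p.1+1)) * (c p.2 * u1^(2*p.2+1))
        + (c p.2 * (u2/2)^(2*p.2+1)) * (c p.1 * u1^(2*p.1+1)))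
      ≤ ∑' p : ℕ×ℕ, ((c p.1 * (u1/2)^(2*p.1+1)) * (c p.2 * u2^(2*p.2+1))
        + (c p.2 * (u1/2)^(2*p.2+1)) * (c p.1 * u2^(2*p.1+1))) :=
    Summable.tsum_le_tsum (fun p => sym_le h0 h12 p.1 p.2) (hF.add hFs) (hG.add hGs)
  rw [Summable.tsum_add hF hFs, Summable.tsum_add hG hGs, swapF, swapG] at key
  linarith

end BAux

/-- for `0.227 ≤ δ ≤ 3`, the quantity `M(L_{δ,n})` is nonincreasing in
the integer `n` for `n ≥ 158`. -/
theorem M_monotone (δ : ℝ) (hδ0 : 0.227 ≤ δ) (hδ1 : δ ≤ 3)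
    (w : ℝ)
    (hw : w = 1 / 2 * Real.log (1 / δ) +
      0.736 * ((1.689 : ℝ) ^ δ * (1.222 + (1.002 : ℝ) ^ δ) + 3 * (1.692 : ℝ) ^ δ) / δ +
      0.119)
    (M : ℝ → ℝ)
    (hM : ∀ u : ℝ, M u = (u * w + u * Real.log u + 2 * besselI1 u) / besselI1 (2 * u))
    (L : ℕ → ℝ)
    (hL : ∀ n : ℕ, L n = π / 18 * Real.sqrt (δ * (12 * n - δ)))
    (m n : ℕ) (hm : 158 ≤ m) (hmn : m ≤ n) :
    M (L n) ≤ M (L m) := by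
  have hδpos : (0:ℝ) < δ := by linarith
  have hm' : (158:ℝ) ≤ (m:ℝ) := by exact_mod_cast hm
  have hmn' : (m:ℝ) ≤ (n:ℝ) := by exact_mod_cast hmn
  -- L m ≥ 3
  have hLm : 3 ≤ L m := by
    rw [hL]
    have harg : (400:ℝ) ≤ δ * (12 * m - δ) := by
      nlinarith [mul_nonneg (by linarith : (0:ℝ) ≤ δ) (by linarith : (0:ℝ) ≤ (m:ℝ) - 158),
        mul_nonneg (by linarith : (0:ℝ) ≤ δ - 0.227) (by linarith : (0:ℝ) ≤ 1893 - δ)]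
    have h20 : (20:ℝ) ≤ Real.sqrt (δ * (12 * m - δ)) :=
      (Real.le_sqrt (by norm_num) (by linarith)).2 (by nlinarith)
    have hπ := Real.pi_gt_d6
    have hstep : (3.141592/18) * 20 ≤ π/18 * Real.sqrt (δ * (12 * m - δ)) :=
      mul_le_mul (by linarith) h20 (by norm_num) (by positivity)
    linarith
  -- L m ≤ L n
  have hLmn : L m ≤ L n := by
    rw [hL, hL]
    have harg : δ * (12 * m - δ) ≤ δ * (12 * n - δ) := by nlinarith
    exact mul_le_mul_of_nonneg_left (Real.sqrt_le_sqrt harg) (by positivity)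
  have h0m : (0:ℝ) < L m := by linarith
  have h0n : (0:ℝ) < L n := by linarith
  -- w ≥ 0
  have hw0 : 0 ≤ w := by
    have t1 : (1:ℝ) ≤ (1.689:ℝ)^δ := Real.one_le_rpow (by norm_num) hδpos.le
    have t2 : (1:ℝ) ≤ (1.002:ℝ)^δ := Real.one_le_rpow (by norm_num) hδpos.le
    have t3 : (1:ℝ) ≤ (1.692:ℝ)^δ := Real.one_le_rpow (by norm_num) hδpos.le
    have hb : (2.222:ℝ) ≤ 1.222 + (1.002:ℝ)^δ := by linarith
    have hq : (2.222:ℝ) ≤ (1.689:ℝ)^δ * (1.222 + (1.002:ℝ)^δ) := by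
      nlinarith [mul_le_mul_of_nonneg_right t1 (show (0:ℝ) ≤ 1.222 + (1.002:ℝ)^δ by linarith)]
    have hX : (5.222:ℝ) ≤ (1.689:ℝ)^δ * (1.222 + (1.002:ℝ)^δ) + 3 * (1.692:ℝ)^δ := by linarith
    have hdiv : (0.736 * 5.222) / 3 ≤
        0.736 * ((1.689:ℝ)^δ * (1.222 + (1.002:ℝ)^δ) + 3 * (1.692:ℝ)^δ) / δ := by
      apply div_le_div₀ (by linarith) (by linarith) hδpos hδ1
    have hlogδ : Real.log δ ≤ 2 := by
      nlinarith [Real.log_le_sub_one_of_pos hδpos]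
    have hlg : Real.log (1/δ) = - Real.log δ := by rw [one_div, Real.log_inv]
    rw [hw, hlg]
    linarith
  -- denominators positive
  have hD1 : 0 < besselI1 (2 * L m) := BAux.besselI1_pos (by linarith)
  have hD2 : 0 < besselI1 (2 * L n) := BAux.besselI1_pos (by linarith)
  rw [hM, hM, div_le_div_iff₀ hD2 hD1]
  -- log facts
  have hlog1 : 1 ≤ Real.log (L m) := by
    rw [Real.le_log_iff_exp_le h0m]
    nlinarith [Real.exp_one_lt_d9]
  have hlogmn : L m * (Real.log (L n) - Real.log (L m)) ≤ L n - L m := by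
    have hdiv := Real.log_le_sub_one_of_pos (show 0 < L n / L m by positivity)
    rw [Real.log_div (ne_of_gt h0n) (ne_of_gt h0m)] at hdiv
    have hstep := mul_le_mul_of_nonneg_left hdiv h0m.le
    have e : L m * (L n / L m - 1) = L n - L m := by field_simp
    linarith [hstep, e.le, e.ge]
  have hsq : (L m)^2 * (w + Real.log (L n)) ≤ (L n)^2 * (w + Real.log (L m)) := by
    have hin : (0:ℝ) ≤ (L n + L m) * (w + Real.log (L m)) - L m := by
      nlinarith [mul_le_mul_of_nonneg_left (show (1:ℝ) ≤ w + Real.log (L m) by linarith)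
        (show (0:ℝ) ≤ L n + L m by linarith)]
    nlinarith [mul_le_mul_of_nonneg_left hlogmn h0m.le,
      mul_nonneg (sub_nonneg.2 hLmn) hin]
  -- denominator growth and Bessel ratio
  have hg := BAux.denom_mono (show 2 ≤ L m by linarith) hLmn
  have hB := BAux.prod_mono h0m hLmn
  -- A part
  have hA : L n * (w + Real.log (L n)) * besselI1 (2 * L m)
      ≤ L m * (w + Real.log (L m)) * besselI1 (2 * L n) := by
    have h3 : (0:ℝ) < (L m)^2 := by positivity
    have step1 : L n * besselI1 (2 * L m) * ((L m)^2 * (w + Real.log (L n)))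
        ≤ L n * besselI1 (2 * L m) * ((L n)^2 * (w + Real.log (L m))) :=
      mul_le_mul_of_nonneg_left hsq (mul_nonneg h0n.le hD1.le)
    have step2 : (w + Real.log (L m)) * ((L n)^3 * besselI1 (2 * L m))
        ≤ (w + Real.log (L m)) * ((L m)^3 * besselI1 (2 * L n)) :=
      mul_le_mul_of_nonneg_left hg (by linarith)
    have hgoal : (L m)^2 * (L n * (w + Real.log (L n)) * besselI1 (2 * L m))
        ≤ (L m)^2 * (L m * (w + Real.log (L m)) * besselI1 (2 * L n)) := by
      nlinarith [step1, step2]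
    exact le_of_mul_le_mul_left hgoal h3
  nlinarith [hA, hB]
end

section
/- For all real numbers u, v with 3 ≤ u ≤ v, one has (v·log v)/I₁(2v) ≤ (u·log u)/I₁(2u); that is, the function u ↦ (u·log u)/I₁(2u) is nonincreasing on [3,∞). -/
noncomputable def reducedBesselI1 (u : ℝ) : ℝ :=
  ∑' m : ℕ, (1 / (m.factorial * (m + 1).factorial) : ℝ) * u ^ (2 * m)

lemma summable_reducedBesselI1 (u : ℝ) :
    Summable (fun m : ℕ => (1 / (m.factorial * (m + 1).factorial) : ℝ) * u ^ (2 * m)) := by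
  refine Summable.of_nonneg_of_le (fun m => by simp only [pow_mul]; positivity) (fun m => ?_)
    (Real.summable_pow_div_factorial (u ^ 2))
  have hterm : (1 / (m.factorial * (m + 1).factorial) : ℝ) * u ^ (2 * m)
      = (u ^ 2) ^ m / m.factorial / (m + 1).factorial := by
    rw [pow_mul]; field_simp
  rw [hterm]
  exact div_le_self (by positivity) (Nat.one_le_cast.mpr (Nat.factorial_pos _))

lemma besselI1_two_mul (u : ℝ) : besselI1 (2 * u) = u * reducedBesselI1 u := by
  rw [besselI1, reducedBesselI1, ← tsum_mul_left]
  congr 1 with m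
  rw [mul_div_cancel_left₀ u two_ne_zero, pow_succ]
  ring

lemma one_le_reducedBesselI1 (u : ℝ) : 1 ≤ reducedBesselI1 u := by
  simpa [reducedBesselI1] using
    (summable_reducedBesselI1 u).le_tsum 0 (fun m _ => by simp only [pow_mul]; positivity)

lemma mul_reducedBesselI1_le_mul {u v : ℝ} (huv : u ≤ v) (h2 : 2 ≤ u * v) :
    v * reducedBesselI1 u ≤ u * reducedBesselI1 v := by
  set F : ℕ → ℝ := fun m =>
    (1 / (m.factorial * (m + 1).factorial) : ℝ) * (u * v ^ (2 * m) - v * u ^ (2 * m)) with hF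
  have hsummable : Summable F := by
    simpa only [hF, mul_sub, mul_left_comm _ u, mul_left_comm _ v] using
      ((summable_reducedBesselI1 v).mul_left u).sub ((summable_reducedBesselI1 u).mul_left v)
  have htsum : ∑' m, F m = u * reducedBesselI1 v - v * reducedBesselI1 u := by
    simp only [hF, mul_sub, mul_left_comm _ u, mul_left_comm _ v]
    rw [((summable_reducedBesselI1 v).mul_left u).tsum_sub
      ((summable_reducedBesselI1 u).mul_left v), tsum_mul_left, tsum_mul_left, reducedBesselI1,
      reducedBesselI1]
  have hhead : 0 ≤ ∑ m ∈ Finset.range 2, F m := by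
    have : ∑ m ∈ Finset.range 2, F m = (v - u) * (u * v / 2 - 1) := by
      simp only [hF, Finset.sum_range_succ, Finset.range_one, Finset.sum_singleton,
        Nat.factorial_zero, Nat.factorial_one, Nat.cast_one]
      ring
    rw [this]
    exact mul_nonneg (by linarith) (by linarith)
  have htail : 0 ≤ ∑' m, F (m + 2) := by
    refine tsum_nonneg fun m => ?_
    have hodd : u ^ (2 * m + 3) ≤ v ^ (2 * m + 3) :=
      (Odd.pow_le_pow ⟨m + 1, by ring⟩).mpr huv
    have : F (m + 2) = (1 / ((m + 2).factorial * (m + 2 + 1).factorial) : ℝ) * (u * v) *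
        (v ^ (2 * m + 3) - u ^ (2 * m + 3)) := by
      simp only [hF, show 2 * (m + 2) = 2 * m + 3 + 1 by ring, pow_succ]; ring
    rw [this]
    exact mul_nonneg (mul_nonneg (by positivity) (by linarith)) (sub_nonneg.mpr hodd)
  linarith [hsummable.sum_add_tsum_nat_add 2]

/-- `u ↦ (u log u)/I₁(2u)` is nonincreasing on `[3, ∞)`. -/
theorem ulogu_div_besselI1_antitone (u v : ℝ) (hu : 3 ≤ u) (huv : u ≤ v) :
    v * Real.log v / besselI1 (2 * v) ≤ u * Real.log u / besselI1 (2 * u) := by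
  have hu0 : 0 < u := by linarith
  have hv0 : 0 < v := by linarith
  have hgu : 0 < reducedBesselI1 u := one_pos.trans_le (one_le_reducedBesselI1 u)
  have hgv : 0 < reducedBesselI1 v := one_pos.trans_le (one_le_reducedBesselI1 v)
  have he : Real.exp 1 ≤ u := by linarith [Real.exp_one_lt_d9]
  have hlog : Real.log v / v ≤ Real.log u / u :=
    Real.log_div_self_antitoneOn he (he.trans huv) huv
  have hg : reducedBesselI1 u / u ≤ reducedBesselI1 v / v := by
    rw [div_le_div_iff₀ hu0 hv0]
    linarith [mul_reducedBesselI1_le_mul huv (by nlinarith : 2 ≤ u * v)]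
  have hlogu : 0 < Real.log u / u := div_pos (Real.log_pos (by linarith)) hu0
  rw [besselI1_two_mul, besselI1_two_mul]
  calc v * Real.log v / (v * reducedBesselI1 v)
      = (Real.log v / v) / (reducedBesselI1 v / v) := by field_simp
    _ ≤ (Real.log u / u) / (reducedBesselI1 u / u) :=
        div_le_div₀ hlogu.le hlog (by positivity) hg
    _ = u * Real.log u / (u * reducedBesselI1 u) := by field_simp
end

section
/- For all real numbers u, v with 0 < u ≤ v, one has I₁(v)/I₁(2v) ≤ I₁(u)/I₁(2u); that is, the function u ↦ I₁(u)/I₁(2u) is nonincreasing on (0,∞). -/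
namespace BesselAux

noncomputable def c (m : ℕ) : ℝ := 1 / (m.factorial * (m + 1).factorial)

lemma c_pos (m : ℕ) : 0 < c m := by
  unfold c
  positivity

lemma summable_norm (x : ℝ) :
    Summable fun m : ℕ => ‖c m * (x / 2) ^ (2 * m + 1)‖ := by
  have h : Summable fun m : ℕ => ((x / 2) ^ 2) ^ m / m.factorial * |x / 2| :=
    (Real.summable_pow_div_factorial ((x / 2) ^ 2)).mul_right _
  apply h.of_nonneg_of_le (fun m => norm_nonneg _)
  intro m
  have h1 : ‖c m * (x / 2) ^ (2 * m + 1)‖ = c m * |x / 2| ^ (2 * m + 1) := by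
    rw [norm_mul, Real.norm_eq_abs, Real.norm_eq_abs, abs_of_pos (c_pos m), abs_pow]
  rw [h1]
  have h2 : c m ≤ 1 / m.factorial := by
    unfold c
    rw [div_le_div_iff₀ (by positivity) (by positivity)]
    have : (1 : ℝ) ≤ (m + 1).factorial := by exact_mod_cast Nat.one_le_iff_ne_zero.2 (m + 1).factorial_ne_zero
    nlinarith [(Nat.cast_pos (α := ℝ)).2 m.factorial_pos]
  have h3 : |x / 2| ^ (2 * m + 1) = (|x / 2| ^ 2) ^ m * |x / 2| := by
    rw [← pow_mul, ← pow_succ]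
  rw [h3]
  have h4 : (|x / 2| ^ 2) ^ m = ((x / 2) ^ 2) ^ m := by rw [sq_abs]
  rw [h4]
  have h5 : (0:ℝ) ≤ ((x / 2) ^ 2) ^ m := by positivity
  have h6 : (0:ℝ) ≤ |x / 2| := abs_nonneg _
  calc c m * (((x / 2) ^ 2) ^ m * |x / 2|)
      ≤ 1 / m.factorial * (((x / 2) ^ 2) ^ m * |x / 2|) := by
        apply mul_le_mul_of_nonneg_right h2; positivity
    _ = ((x / 2) ^ 2) ^ m / m.factorial * |x / 2| := by ring

lemma summable (x : ℝ) : Summable fun m : ℕ => c m * (x / 2) ^ (2 * m + 1) :=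
  (summable_norm x).of_norm

lemma besselI1_eq (x : ℝ) : besselI1 x = ∑' m : ℕ, c m * (x / 2) ^ (2 * m + 1) := rfl

lemma besselI1_pos {x : ℝ} (hx : 0 < x) : 0 < besselI1 x := by
  rw [besselI1_eq]
  have hpos : ∀ m : ℕ, 0 ≤ c m * (x / 2) ^ (2 * m + 1) := by
    intro m
    have := c_pos m
    positivity
  refine Summable.tsum_pos (summable x) hpos 0 ?_
  have := c_pos 0
  positivity

/-- Key pointwise inequality after symmetrization. -/
lemma key (a b : ℝ) (ha : 0 < a) (hab : a ≤ b) (m n : ℕ) :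
    (b / 2) ^ (2 * m + 1) * a ^ (2 * n + 1) + (b / 2) ^ (2 * n + 1) * a ^ (2 * m + 1) ≤
    (a / 2) ^ (2 * m + 1) * b ^ (2 * n + 1) + (a / 2) ^ (2 * n + 1) * b ^ (2 * m + 1) := by
  -- reduce to a statement about exponents p ≤ q
  suffices H : ∀ p q : ℕ, p ≤ q →
      (b / 2) ^ p * a ^ q + (b / 2) ^ q * a ^ p ≤
      (a / 2) ^ p * b ^ q + (a / 2) ^ q * b ^ p by
    rcases le_total m n with h | h
    · exact H (2 * m + 1) (2 * n + 1) (by omega)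
    · have := H (2 * n + 1) (2 * m + 1) (by omega)
      linarith
  intro p q hpq
  have hb : 0 < b := lt_of_lt_of_le ha hab
  have hXY : b ^ p * a ^ q ≤ a ^ p * b ^ q := by
    have hk : a ^ (q - p) ≤ b ^ (q - p) := pow_le_pow_left₀ ha.le hab _
    have ea : a ^ q = a ^ p * a ^ (q - p) := by rw [← pow_add]; congr 1; omega
    have eb : b ^ q = b ^ p * b ^ (q - p) := by rw [← pow_add]; congr 1; omega
    have h1 : b ^ p * a ^ q = (a ^ p * b ^ p) * a ^ (q - p) := by rw [ea]; ring
    have h2 : a ^ p * b ^ q = (a ^ p * b ^ p) * b ^ (q - p) := by rw [eb]; ring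
    rw [h1, h2]
    apply mul_le_mul_of_nonneg_left hk
    positivity
  have hst : (1 : ℝ) / 2 ^ q ≤ 1 / 2 ^ p := by
    apply div_le_div_of_nonneg_left one_pos.le (by positivity)
    exact pow_le_pow_right₀ one_le_two hpq
  have hrw : ∀ x y : ℝ, (x / 2) ^ p * y ^ q = (1 / 2 ^ p) * (x ^ p * y ^ q) := by
    intro x y
    rw [div_pow]
    ring
  have hrw' : ∀ x y : ℝ, (x / 2) ^ q * y ^ p = (1 / 2 ^ q) * (x ^ q * y ^ p) := by
    intro x y
    rw [div_pow]
    ring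
  rw [hrw b a, hrw' b a, hrw a b, hrw' a b]
  have hs : (0:ℝ) ≤ 1 / 2 ^ p := by positivity
  have ht : (0:ℝ) ≤ 1 / 2 ^ q := by positivity
  nlinarith [mul_nonneg (sub_nonneg.2 hst) (sub_nonneg.2 hXY)]


/-- The product-family term: `Fa a b` sums to `I₁(b) * I₁(2a)`. -/
noncomputable def Fa (a b : ℝ) : ℕ × ℕ → ℝ := fun p =>
  (c p.1 * (b / 2) ^ (2 * p.1 + 1)) * (c p.2 * a ^ (2 * p.2 + 1))

lemma nn_term (x : ℝ) (hx : 0 < x) (m : ℕ) : 0 ≤ c m * x ^ (2 * m + 1) := by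
  have := c_pos m
  positivity

lemma summable_poly (a : ℝ) : Summable fun m : ℕ => c m * a ^ (2 * m + 1) := by
  have h := BesselAux.summable (2 * a)
  have e : (fun m : ℕ => c m * (2 * a / 2) ^ (2 * m + 1))
      = fun m : ℕ => c m * a ^ (2 * m + 1) := by
    funext m; congr 2; field_simp
  rwa [e] at h

lemma summable_norm_of_nonneg {f : ℕ → ℝ} (hf : ∀ m, 0 ≤ f m) (hs : Summable f) :
    Summable fun m => ‖f m‖ := by
  simpa [Real.norm_eq_abs, abs_of_nonneg, hf] using hs.abs

lemma summable_Fa {a b : ℝ} (ha : 0 < a) (hb : 0 < b) : Summable (Fa a b) := by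
  unfold Fa
  exact summable_mul_of_summable_norm
    (f := fun m : ℕ => c m * (b / 2) ^ (2 * m + 1))
    (g := fun m : ℕ => c m * a ^ (2 * m + 1))
    (summable_norm_of_nonneg (fun m => nn_term (b / 2) (by linarith) m) (BesselAux.summable b))
    (summable_norm_of_nonneg (fun m => nn_term a ha m) (summable_poly a))

lemma prod_eq {a b : ℝ} (ha : 0 < a) (hb : 0 < b) :
    besselI1 b * besselI1 (2 * a) = ∑' p : ℕ × ℕ, Fa a b p := by
  have e2 : besselI1 (2 * a) = ∑' m : ℕ, c m * a ^ (2 * m + 1) := by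
    rw [besselI1_eq]
    congr 1; funext m; congr 2; field_simp
  rw [besselI1_eq, e2]
  exact Summable.tsum_mul_tsum (BesselAux.summable b) (summable_poly a) (summable_Fa ha hb)

lemma summable_Fa_swap {a b : ℝ} (ha : 0 < a) (hb : 0 < b) :
    Summable fun p : ℕ × ℕ => Fa a b p.swap :=
  ((Equiv.prodComm ℕ ℕ).summable_iff (f := Fa a b)).2 (summable_Fa ha hb)

lemma tsum_Fa_swap (a b : ℝ) :
    ∑' p : ℕ × ℕ, Fa a b p.swap = ∑' p : ℕ × ℕ, Fa a b p :=
  (Equiv.prodComm ℕ ℕ).tsum_eq (Fa a b)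

lemma pointwise {a b : ℝ} (ha : 0 < a) (hab : a ≤ b) (p : ℕ × ℕ) :
    Fa a b p + Fa a b p.swap ≤ Fa b a p + Fa b a p.swap := by
  obtain ⟨m, n⟩ := p
  have hk := key a b ha hab m n
  have hc : (0:ℝ) ≤ c m * c n := (mul_pos (c_pos m) (c_pos n)).le
  have h := mul_le_mul_of_nonneg_left hk hc
  unfold Fa
  simp only [Prod.swap_prod_mk]
  nlinarith [h]

end BesselAux

open BesselAux in
/-- `u ↦ I₁(u)/I₁(2u)` is nonincreasing on `(0, ∞)`. -/
theorem besselI1_ratio_antitone (u v : ℝ) (hu : 0 < u) (huv : u ≤ v) :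
    besselI1 v / besselI1 (2 * v) ≤ besselI1 u / besselI1 (2 * u) := by
  have hv : 0 < v := lt_of_lt_of_le hu huv
  rw [div_le_div_iff₀ (besselI1_pos (by linarith)) (besselI1_pos (by linarith))]
  rw [prod_eq hu hv, prod_eq hv hu]
  have h2 : ∑' p : ℕ × ℕ, (Fa u v p + Fa u v p.swap)
      ≤ ∑' p : ℕ × ℕ, (Fa v u p + Fa v u p.swap) :=
    Summable.tsum_le_tsum (pointwise hu huv)
      ((summable_Fa hu hv).add (summable_Fa_swap hu hv))
      ((summable_Fa hv hu).add (summable_Fa_swap hv hu))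
  rw [Summable.tsum_add (summable_Fa hu hv) (summable_Fa_swap hu hv),
    Summable.tsum_add (summable_Fa hv hu) (summable_Fa_swap hv hu),
    tsum_Fa_swap, tsum_Fa_swap] at h2
  linarith
end
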